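/- arXiv:2601.12679 — 2 statements merged into one kernel-verified Lean document; each statement's English description precedes it below -/
import Mathlib

section
/- Let (γ, ν₁, ν₂) be a non-parabolic spatial hybrid framed curve with curvature (l,m,n,α), and suppose D(t₀) := m(t₀)n'(t₀) - m'(t₀)n(t₀) + δ₁δ₂l(t₀)m²(t₀) + l(t₀)n²(t₀) ≠ 0 and α(t₀) ≠ 0. Then f_x'(t₀) = f_x''(t₀) = f_x'''(t₀) = 0 if and only if γ(t₀) - x = [(n'α - nα' + δ₁δ₂lmα)/D]ν₁(t₀) + [(mα' - m'α + lnα)/D]ν₂(t₀), all coefficients evaluated at t₀. -/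
open Real Matrix

noncomputable section

/-- Scalar product on the spatial hybrid number space, coordinates (b,c,d). -/
def g (x y : Fin 3 → ℝ) : ℝ := x 0 * y 0 - x 0 * y 1 - y 0 * x 1 - x 2 * y 2

/-- Hybridian product of g-orthogonal spatial hybrid numbers. -/
def hprod (x y : Fin 3 → ℝ) : Fin 3 → ℝ :=
  ![x 0 * y 2 - y 0 * x 2, x 0 * y 2 - y 0 * x 2 - x 1 * y 2 + y 1 * x 2,
    y 0 * x 1 - x 0 * y 1]

/-- Gram matrix of g. -/
def Gmat : Matrix (Fin 3) (Fin 3) ℝ := !![1, -1, 0; -1, 0, 0; 0, 0, -1]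

lemma g_comm' (u v : Fin 3 → ℝ) : g u v = g v u := by simp [g]; ring

lemma g_smul_add_left (a b : ℝ) (u v w : Fin 3 → ℝ) :
    g (a • u + b • v) w = a * g u w + b * g v w := by
  simp [g, Pi.add_apply, Pi.smul_apply, smul_eq_mul]; ring

lemma g_smul_left' (a : ℝ) (u w : Fin 3 → ℝ) : g (a • u) w = a * g u w := by
  simp [g, Pi.smul_apply, smul_eq_mul]; ring

lemma g_smul_right' (a : ℝ) (u w : Fin 3 → ℝ) : g u (a • w) = a * g u w := by
  simp [g, Pi.smul_apply, smul_eq_mul]; ring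

lemma g_sub_comb_right (u v : Fin 3 → ℝ) (c1 c2 : ℝ) (w1 w2 : Fin 3 → ℝ) :
    g u (v - (c1 • w1 + c2 • w2)) = g u v - c1 * g u w1 - c2 * g u w2 := by
  simp [g, Pi.sub_apply, Pi.add_apply, Pi.smul_apply, smul_eq_mul]; ring

lemma g_comb_right (u : Fin 3 → ℝ) (c1 c2 : ℝ) (w1 w2 : Fin 3 → ℝ) :
    g u (c1 • w1 + c2 • w2) = c1 * g u w1 + c2 * g u w2 := by
  simp [g, Pi.add_apply, Pi.smul_apply, smul_eq_mul]; ring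

lemma hasDerivAt_g {u v : ℝ → Fin 3 → ℝ} {u' v' : Fin 3 → ℝ} {t : ℝ}
    (hu : HasDerivAt u u' t) (hv : HasDerivAt v v' t) :
    HasDerivAt (fun s => g (u s) (v s)) (g u' (v t) + g (u t) v') t := by
  have hu0 := hasDerivAt_pi.1 hu 0
  have hu1 := hasDerivAt_pi.1 hu 1
  have hu2 := hasDerivAt_pi.1 hu 2
  have hv0 := hasDerivAt_pi.1 hv 0
  have hv1 := hasDerivAt_pi.1 hv 1
  have hv2 := hasDerivAt_pi.1 hv 2
  have h : HasDerivAt (fun s => u s 0 * v s 0 - u s 0 * v s 1 - v s 0 * u s 1 - u s 2 * v s 2) _ t :=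
    (((hu0.mul hv0).sub (hu0.mul hv1)).sub (hv0.mul hu1)).sub (hu2.mul hv2)
  convert h using 1
  · funext s; simp [g]
  simp [g]; ring

lemma frame_w_zero (p q r w : Fin 3 → ℝ) (δ₁ δ₂ : ℝ)
    (h1 : δ₁ = 1 ∨ δ₁ = -1) (h2 : δ₂ = 1 ∨ δ₂ = -1)
    (hr : r = hprod p q)
    (hp : g p p = δ₁) (hq : g q q = δ₂) (hpq : g p q = 0)
    (hw1 : g p w = 0) (hw2 : g q w = 0) (hw3 : g r w = 0) :
    w = 0 := by
  have hrr : g r r = δ₁ * δ₂ := by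
    have h' : g (hprod p q) (hprod p q) = g p p * g q q - g p q ^ 2 := by
      simp [g, hprod]; ring
    rw [hr, h', hp, hq, hpq]; ring
  have hpr : g p r = 0 := by rw [hr]; simp [g, hprod]; ring
  have hqr : g q r = 0 := by rw [hr]; simp [g, hprod]; ring
  set M : Matrix (Fin 3) (Fin 3) ℝ := Matrix.of ![p, q, r] with hM
  set N : Matrix (Fin 3) (Fin 3) ℝ := M * Gmat with hN
  have hw1' : p 0 * w 0 - p 0 * w 1 - w 0 * p 1 - p 2 * w 2 = 0 := hw1
  have hw2' : q 0 * w 0 - q 0 * w 1 - w 0 * q 1 - q 2 * w 2 = 0 := hw2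
  have hw3' : r 0 * w 0 - r 0 * w 1 - w 0 * r 1 - r 2 * w 2 = 0 := hw3
  have hNw : N *ᵥ w = 0 := by
    have c0 : (N *ᵥ w) 0 = 0 := by
      simp [hN, hM, Matrix.mulVec, Matrix.mul_apply, dotProduct,
        Fin.sum_univ_three, Gmat, Matrix.vecHead, Matrix.vecTail]
      linear_combination hw1'
    have c1 : (N *ᵥ w) 1 = 0 := by
      simp [hN, hM, Matrix.mulVec, Matrix.mul_apply, dotProduct,
        Fin.sum_univ_three, Gmat, Matrix.vecHead, Matrix.vecTail]
      linear_combination hw2'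
    have c2 : (N *ᵥ w) 2 = 0 := by
      simp [hN, hM, Matrix.mulVec, Matrix.mul_apply, dotProduct,
        Fin.sum_univ_three, Gmat, Matrix.vecHead, Matrix.vecTail]
      linear_combination hw3'
    funext i
    fin_cases i
    · exact c0
    · exact c1
    · exact c2
  have e : ∀ (i j : Fin 3) (u v : Fin 3 → ℝ), M i = u → M j = v →
      (N * Mᵀ) i j = g u v := by
    intro i j u v hu hv
    subst hu hv
    simp [hN, Matrix.mul_apply, Fin.sum_univ_three, Gmat, g,
      Matrix.vecHead, Matrix.vecTail]
    ring
  have e00 := e 0 0 p p rfl rfl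
  have e01 := e 0 1 p q rfl rfl
  have e02 := e 0 2 p r rfl rfl
  have e10 := e 1 0 q p rfl rfl
  have e11 := e 1 1 q q rfl rfl
  have e12 := e 1 2 q r rfl rfl
  have e20 := e 2 0 r p rfl rfl
  have e21 := e 2 1 r q rfl rfl
  have e22 := e 2 2 r r rfl rfl
  have hdet2 : (N * Mᵀ).det = 1 := by
    rw [Matrix.det_fin_three, e00, e01, e02, e10, e11, e12, e20, e21, e22,
      hp, hq, hpq, hpr, hqr, hrr, g_comm' q p, g_comm' r p, g_comm' r q,
      hpq, hpr, hqr]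
    rcases h1 with h | h <;> rcases h2 with h' | h' <;> rw [h, h'] <;> norm_num
  have hdet : N.det ≠ 0 := by
    intro h0
    rw [Matrix.det_mul] at hdet2
    rw [h0] at hdet2; norm_num at hdet2
  exact Matrix.eq_zero_of_mulVec_eq_zero hdet hNw
/-- Characterization of f_x'(t₀) = f_x''(t₀) = f_x'''(t₀) = 0 :
γ(t₀) - x is the evolute-type combination of ν₁(t₀) and ν₂(t₀). -/
theorem stmt9 (γ ν₁ ν₂ : ℝ → Fin 3 → ℝ) (μ : ℝ → Fin 3 → ℝ)
    (l m n α : ℝ → ℝ) (δ₁ δ₂ : ℝ)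
    (hδ₁ : δ₁ = 1 ∨ δ₁ = -1) (hδ₂ : δ₂ = 1 ∨ δ₂ = -1)
    (hμ : ∀ t, μ t = hprod (ν₁ t) (ν₂ t))
    (hu₁ : ∀ t, g (ν₁ t) (ν₁ t) = δ₁) (hu₂ : ∀ t, g (ν₂ t) (ν₂ t) = δ₂)
    (ho : ∀ t, g (ν₁ t) (ν₂ t) = 0)
    (hγd : ContDiff ℝ (⊤ : ℕ∞) γ) (hν₁d : ContDiff ℝ (⊤ : ℕ∞) ν₁) (hν₂d : ContDiff ℝ (⊤ : ℕ∞) ν₂)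
    (hld : ContDiff ℝ (⊤ : ℕ∞) l) (hmd : ContDiff ℝ (⊤ : ℕ∞) m) (hnd : ContDiff ℝ (⊤ : ℕ∞) n)
    (hαd : ContDiff ℝ (⊤ : ℕ∞) α)
    (hF₁ : ∀ t, deriv ν₁ t = l t • ν₂ t + m t • μ t)
    (hF₂ : ∀ t, deriv ν₂ t = (-(δ₁ * δ₂) * l t) • ν₁ t + n t • μ t)
    (hFμ : ∀ t, deriv μ t = (-δ₂ * m t) • ν₁ t + (-δ₁ * n t) • ν₂ t)
    (hγ' : ∀ t, deriv γ t = α t • μ t)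
    (x : Fin 3 → ℝ) (f : ℝ → ℝ) (hf : ∀ t, f t = g (γ t - x) (γ t - x))
    (t₀ : ℝ) (hα : α t₀ ≠ 0)
    (D : ℝ)
    (hD : D = m t₀ * deriv n t₀ - deriv m t₀ * n t₀ +
      δ₁ * δ₂ * l t₀ * m t₀ ^ 2 + l t₀ * n t₀ ^ 2)
    (hDne : D ≠ 0) :
    (deriv f t₀ = 0 ∧ deriv (deriv f) t₀ = 0 ∧
      deriv (deriv (deriv f)) t₀ = 0) ↔
    γ t₀ - x =
      ((deriv n t₀ * α t₀ - n t₀ * deriv α t₀ +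
        δ₁ * δ₂ * l t₀ * m t₀ * α t₀) / D) • ν₁ t₀ +
      ((m t₀ * deriv α t₀ - deriv m t₀ * α t₀ +
        l t₀ * n t₀ * α t₀) / D) • ν₂ t₀ := by
  have hδ1sq : δ₁ * δ₁ = 1 := by rcases hδ₁ with h | h <;> rw [h] <;> norm_num
  have hδ2sq : δ₂ * δ₂ = 1 := by rcases hδ₂ with h | h <;> rw [h] <;> norm_num
  -- differentiability
  have hγdiff : Differentiable ℝ γ := hγd.differentiable (by simp)
  have hν₁diff : Differentiable ℝ ν₁ := hν₁d.differentiable (by simp)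
  have hν₂diff : Differentiable ℝ ν₂ := hν₂d.differentiable (by simp)
  have hc1 : ∀ i, Differentiable ℝ (fun t => ν₁ t i) :=
    fun i => differentiable_pi.mp hν₁diff i
  have hc2 : ∀ i, Differentiable ℝ (fun t => ν₂ t i) :=
    fun i => differentiable_pi.mp hν₂diff i
  have hμdiff : Differentiable ℝ μ := by
    have hμe : μ = fun t => ![ν₁ t 0 * ν₂ t 2 - ν₂ t 0 * ν₁ t 2,
        ν₁ t 0 * ν₂ t 2 - ν₂ t 0 * ν₁ t 2 - ν₁ t 1 * ν₂ t 2 + ν₂ t 1 * ν₁ t 2,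
        ν₂ t 0 * ν₁ t 1 - ν₁ t 0 * ν₂ t 1] := funext fun t => hμ t
    rw [hμe]
    refine differentiable_pi.mpr fun i => ?_
    fin_cases i
    · exact ((hc1 0).mul (hc2 2)).sub ((hc2 0).mul (hc1 2))
    · exact ((((hc1 0).mul (hc2 2)).sub ((hc2 0).mul (hc1 2))).sub
        ((hc1 1).mul (hc2 2))).add ((hc2 1).mul (hc1 2))
    · exact ((hc2 0).mul (hc1 1)).sub ((hc1 0).mul (hc2 1))
  have hmdiff : Differentiable ℝ m := hmd.differentiable (by simp)
  have hndiff : Differentiable ℝ n := hnd.differentiable (by simp)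
  have hαdiff : Differentiable ℝ α := hαd.differentiable (by simp)
  have hldiff : Differentiable ℝ l := hld.differentiable (by simp)
  have hdαdiff : Differentiable ℝ (deriv α) :=
    ((contDiff_infty_iff_deriv.mp (hαd.of_le (by simp))).2).differentiable
      (by simp)
  -- HasDerivAt facts
  have Hγ : ∀ t, HasDerivAt γ (α t • μ t) t := fun t => by
    rw [← hγ' t]; exact (hγdiff t).hasDerivAt
  have Hsub : ∀ t, HasDerivAt (fun s => γ s - x) (α t • μ t) t :=
    fun t => (Hγ t).sub_const x
  have Hν₁ : ∀ t, HasDerivAt ν₁ (l t • ν₂ t + m t • μ t) t := fun t => by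
    rw [← hF₁ t]; exact (hν₁diff t).hasDerivAt
  have Hν₂ : ∀ t, HasDerivAt ν₂ ((-(δ₁ * δ₂) * l t) • ν₁ t + n t • μ t) t :=
    fun t => by rw [← hF₂ t]; exact (hν₂diff t).hasDerivAt
  have Hμ : ∀ t, HasDerivAt μ ((-δ₂ * m t) • ν₁ t + (-δ₁ * n t) • ν₂ t) t :=
    fun t => by rw [← hFμ t]; exact (hμdiff t).hasDerivAt
  have Hα : ∀ t, HasDerivAt α (deriv α t) t := fun t => (hαdiff t).hasDerivAt
  have Hm : ∀ t, HasDerivAt m (deriv m t) t := fun t => (hmdiff t).hasDerivAt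
  have Hn : ∀ t, HasDerivAt n (deriv n t) t := fun t => (hndiff t).hasDerivAt
  have Hdα : ∀ t, HasDerivAt (deriv α) (deriv (deriv α) t) t :=
    fun t => (hdαdiff t).hasDerivAt
  -- pointwise g facts
  have gν₁μ : ∀ t, g (ν₁ t) (μ t) = 0 := fun t => by
    rw [hμ t]; simp [g, hprod]; ring
  have gν₂μ : ∀ t, g (ν₂ t) (μ t) = 0 := fun t => by
    rw [hμ t]; simp [g, hprod]; ring
  have gμν₁ : ∀ t, g (μ t) (ν₁ t) = 0 := fun t => (g_comm' _ _).trans (gν₁μ t)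
  have gμν₂ : ∀ t, g (μ t) (ν₂ t) = 0 := fun t => (g_comm' _ _).trans (gν₂μ t)
  have gμμ : ∀ t, g (μ t) (μ t) = δ₁ * δ₂ := fun t => by
    have h1 : g (hprod (ν₁ t) (ν₂ t)) (hprod (ν₁ t) (ν₂ t))
        = g (ν₁ t) (ν₁ t) * g (ν₂ t) (ν₂ t) - g (ν₁ t) (ν₂ t) ^ 2 := by
      simp [g, hprod]; ring
    rw [hμ t, h1, hu₁ t, hu₂ t, ho t]; ring
  -- derivatives of the coefficient functions
  have HA : ∀ t, HasDerivAt (fun s => g (ν₁ s) (γ s - x))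
      (l t * g (ν₂ t) (γ t - x) + m t * g (μ t) (γ t - x)) t := by
    intro t
    have h : HasDerivAt (fun s => g (ν₁ s) (γ s - x))
        (g (l t • ν₂ t + m t • μ t) (γ t - x) + g (ν₁ t) (α t • μ t)) t :=
      hasDerivAt_g (Hν₁ t) (Hsub t)
    have e : g (l t • ν₂ t + m t • μ t) (γ t - x) + g (ν₁ t) (α t • μ t)
        = l t * g (ν₂ t) (γ t - x) + m t * g (μ t) (γ t - x) := by
      rw [g_smul_add_left, g_smul_right', gν₁μ t]; ring
    rw [e] at h; exact h
  have HB : ∀ t, HasDerivAt (fun s => g (ν₂ s) (γ s - x))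
      (-(δ₁ * δ₂) * (l t * g (ν₁ t) (γ t - x)) + n t * g (μ t) (γ t - x)) t := by
    intro t
    have h : HasDerivAt (fun s => g (ν₂ s) (γ s - x))
        (g ((-(δ₁ * δ₂) * l t) • ν₁ t + n t • μ t) (γ t - x) +
          g (ν₂ t) (α t • μ t)) t :=
      hasDerivAt_g (Hν₂ t) (Hsub t)
    have e : g ((-(δ₁ * δ₂) * l t) • ν₁ t + n t • μ t) (γ t - x) +
          g (ν₂ t) (α t • μ t)
        = -(δ₁ * δ₂) * (l t * g (ν₁ t) (γ t - x)) + n t * g (μ t) (γ t - x) := by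
      rw [g_smul_add_left, g_smul_right', gν₂μ t]; ring
    rw [e] at h; exact h
  have HC : ∀ t, HasDerivAt (fun s => g (μ s) (γ s - x))
      (-δ₂ * (m t * g (ν₁ t) (γ t - x)) +
        (-δ₁ * (n t * g (ν₂ t) (γ t - x)) + δ₁ * δ₂ * α t)) t := by
    intro t
    have h : HasDerivAt (fun s => g (μ s) (γ s - x))
        (g ((-δ₂ * m t) • ν₁ t + (-δ₁ * n t) • ν₂ t) (γ t - x) +
          g (μ t) (α t • μ t)) t :=
      hasDerivAt_g (Hμ t) (Hsub t)
    have e : g ((-δ₂ * m t) • ν₁ t + (-δ₁ * n t) • ν₂ t) (γ t - x) +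
          g (μ t) (α t • μ t)
        = -δ₂ * (m t * g (ν₁ t) (γ t - x)) +
            (-δ₁ * (n t * g (ν₂ t) (γ t - x)) + δ₁ * δ₂ * α t) := by
      rw [g_smul_add_left, g_smul_right', gμμ t]; ring
    rw [e] at h; exact h
  have Hf : ∀ t, HasDerivAt f (2 * (α t * g (μ t) (γ t - x))) t := by
    intro t
    have hfe : f = fun s => g (γ s - x) (γ s - x) := funext hf
    rw [hfe]
    have h : HasDerivAt (fun s => g (γ s - x) (γ s - x))
        (g (α t • μ t) (γ t - x) + g (γ t - x) (α t • μ t)) t :=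
      hasDerivAt_g (Hsub t) (Hsub t)
    have e : g (α t • μ t) (γ t - x) + g (γ t - x) (α t • μ t)
        = 2 * (α t * g (μ t) (γ t - x)) := by
      rw [g_smul_left', g_smul_right', g_comm' (γ t - x) (μ t)]; ring
    rw [e] at h; exact h
  have hd1 : deriv f = fun t => 2 * (α t * g (μ t) (γ t - x)) :=
    funext fun t => (Hf t).deriv
  have Hf2 : ∀ t, HasDerivAt (fun s => 2 * (α s * g (μ s) (γ s - x)))
      (2 * (deriv α t * g (μ t) (γ t - x) +
        α t * (-δ₂ * (m t * g (ν₁ t) (γ t - x)) +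
          (-δ₁ * (n t * g (ν₂ t) (γ t - x)) + δ₁ * δ₂ * α t)))) t :=
    fun t => ((Hα t).mul (HC t)).const_mul 2
  have hd2 : deriv (deriv f) = fun t => 2 * (deriv α t * g (μ t) (γ t - x) +
      α t * (-δ₂ * (m t * g (ν₁ t) (γ t - x)) +
        (-δ₁ * (n t * g (ν₂ t) (γ t - x)) + δ₁ * δ₂ * α t))) := by
    rw [hd1]; exact funext fun t => (Hf2 t).deriv
  -- third derivative at t₀
  have hIa : HasDerivAt (fun s => m s * g (ν₁ s) (γ s - x))
      (deriv m t₀ * g (ν₁ t₀) (γ t₀ - x) +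
        m t₀ * (l t₀ * g (ν₂ t₀) (γ t₀ - x) + m t₀ * g (μ t₀) (γ t₀ - x))) t₀ :=
    (Hm t₀).mul (HA t₀)
  have hIb : HasDerivAt (fun s => n s * g (ν₂ s) (γ s - x))
      (deriv n t₀ * g (ν₂ t₀) (γ t₀ - x) +
        n t₀ * (-(δ₁ * δ₂) * (l t₀ * g (ν₁ t₀) (γ t₀ - x)) +
          n t₀ * g (μ t₀) (γ t₀ - x))) t₀ :=
    (Hn t₀).mul (HB t₀)
  have hInner : HasDerivAt (fun s => -δ₂ * (m s * g (ν₁ s) (γ s - x)) +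
      (-δ₁ * (n s * g (ν₂ s) (γ s - x)) + δ₁ * δ₂ * α s))
      (-δ₂ * (deriv m t₀ * g (ν₁ t₀) (γ t₀ - x) +
        m t₀ * (l t₀ * g (ν₂ t₀) (γ t₀ - x) + m t₀ * g (μ t₀) (γ t₀ - x))) +
       (-δ₁ * (deriv n t₀ * g (ν₂ t₀) (γ t₀ - x) +
        n t₀ * (-(δ₁ * δ₂) * (l t₀ * g (ν₁ t₀) (γ t₀ - x)) +
          n t₀ * g (μ t₀) (γ t₀ - x))) +
        δ₁ * δ₂ * deriv α t₀)) t₀ :=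
    (hIa.const_mul (-δ₂)).add ((hIb.const_mul (-δ₁)).add
      ((Hα t₀).const_mul (δ₁ * δ₂)))
  have hKf : HasDerivAt (fun s => deriv α s * g (μ s) (γ s - x))
      (deriv (deriv α) t₀ * g (μ t₀) (γ t₀ - x) +
        deriv α t₀ * (-δ₂ * (m t₀ * g (ν₁ t₀) (γ t₀ - x)) +
          (-δ₁ * (n t₀ * g (ν₂ t₀) (γ t₀ - x)) + δ₁ * δ₂ * α t₀))) t₀ :=
    (Hdα t₀).mul (HC t₀)
  have Hf3 : HasDerivAt (fun t => 2 * (deriv α t * g (μ t) (γ t - x) +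
      α t * (-δ₂ * (m t * g (ν₁ t) (γ t - x)) +
        (-δ₁ * (n t * g (ν₂ t) (γ t - x)) + δ₁ * δ₂ * α t))))
      (2 * ((deriv (deriv α) t₀ * g (μ t₀) (γ t₀ - x) +
        deriv α t₀ * (-δ₂ * (m t₀ * g (ν₁ t₀) (γ t₀ - x)) +
          (-δ₁ * (n t₀ * g (ν₂ t₀) (γ t₀ - x)) + δ₁ * δ₂ * α t₀))) +
       (deriv α t₀ * (-δ₂ * (m t₀ * g (ν₁ t₀) (γ t₀ - x)) +
          (-δ₁ * (n t₀ * g (ν₂ t₀) (γ t₀ - x)) + δ₁ * δ₂ * α t₀)) +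
        α t₀ * (-δ₂ * (deriv m t₀ * g (ν₁ t₀) (γ t₀ - x) +
          m t₀ * (l t₀ * g (ν₂ t₀) (γ t₀ - x) + m t₀ * g (μ t₀) (γ t₀ - x))) +
         (-δ₁ * (deriv n t₀ * g (ν₂ t₀) (γ t₀ - x) +
          n t₀ * (-(δ₁ * δ₂) * (l t₀ * g (ν₁ t₀) (γ t₀ - x)) +
            n t₀ * g (μ t₀) (γ t₀ - x))) +
          δ₁ * δ₂ * deriv α t₀))))) t₀ :=
    (hKf.add ((Hα t₀).mul hInner)).const_mul 2
  have hd3 : deriv (deriv (deriv f)) t₀ = 2 * ((deriv (deriv α) t₀ * g (μ t₀) (γ t₀ - x) +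
        deriv α t₀ * (-δ₂ * (m t₀ * g (ν₁ t₀) (γ t₀ - x)) +
          (-δ₁ * (n t₀ * g (ν₂ t₀) (γ t₀ - x)) + δ₁ * δ₂ * α t₀))) +
       (deriv α t₀ * (-δ₂ * (m t₀ * g (ν₁ t₀) (γ t₀ - x)) +
          (-δ₁ * (n t₀ * g (ν₂ t₀) (γ t₀ - x)) + δ₁ * δ₂ * α t₀)) +
        α t₀ * (-δ₂ * (deriv m t₀ * g (ν₁ t₀) (γ t₀ - x) +
          m t₀ * (l t₀ * g (ν₂ t₀) (γ t₀ - x) + m t₀ * g (μ t₀) (γ t₀ - x))) +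
         (-δ₁ * (deriv n t₀ * g (ν₂ t₀) (γ t₀ - x) +
          n t₀ * (-(δ₁ * δ₂) * (l t₀ * g (ν₁ t₀) (γ t₀ - x)) +
            n t₀ * g (μ t₀) (γ t₀ - x))) +
          δ₁ * δ₂ * deriv α t₀)))) := by
    rw [hd2]; exact Hf3.deriv
  rw [hd3, hd2, hd1]
  beta_reduce
  set a := g (ν₁ t₀) (γ t₀ - x) with hadef
  set b := g (ν₂ t₀) (γ t₀ - x) with hbdef
  set c := g (μ t₀) (γ t₀ - x) with hcdef
  set ca := (deriv n t₀ * α t₀ - n t₀ * deriv α t₀ +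
      δ₁ * δ₂ * l t₀ * m t₀ * α t₀) / D with hca
  set cb := (m t₀ * deriv α t₀ - deriv m t₀ * α t₀ +
      l t₀ * n t₀ * α t₀) / D with hcb
  constructor
  · rintro ⟨h1, h2, h3⟩
    have hc0 : c = 0 := by
      rcases mul_eq_zero.mp h1 with h | h
      · norm_num at h
      · exact (mul_eq_zero.mp h).resolve_left hα
    rw [hc0] at h2 h3
    have hX : -δ₂ * (m t₀ * a) + (-δ₁ * (n t₀ * b) + δ₁ * δ₂ * α t₀) = 0 := by
      have h2' : α t₀ * (-δ₂ * (m t₀ * a) +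
          (-δ₁ * (n t₀ * b) + δ₁ * δ₂ * α t₀)) = 0 := by linarith
      exact (mul_eq_zero.mp h2').resolve_left hα
    rw [hX] at h3
    have hY : -δ₂ * (deriv m t₀ * a + m t₀ * (l t₀ * b + m t₀ * 0)) +
        (-δ₁ * (deriv n t₀ * b + n t₀ * (-(δ₁ * δ₂) * (l t₀ * a) + n t₀ * 0)) +
          δ₁ * δ₂ * deriv α t₀) = 0 := by
      have h3' : α t₀ * (-δ₂ * (deriv m t₀ * a + m t₀ * (l t₀ * b + m t₀ * 0)) +
          (-δ₁ * (deriv n t₀ * b + n t₀ * (-(δ₁ * δ₂) * (l t₀ * a) + n t₀ * 0)) +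
            δ₁ * δ₂ * deriv α t₀)) = 0 := by linarith
      exact (mul_eq_zero.mp h3').resolve_left hα
    have e1 : m t₀ * (δ₁ * a) + n t₀ * (δ₂ * b) = α t₀ := by
      linear_combination (-(δ₁ * δ₂)) * hX +
        (α t₀ * δ₁ * δ₁ - m t₀ * δ₁ * a) * hδ2sq + (α t₀ - n t₀ * δ₂ * b) * hδ1sq
    have e2 : (deriv m t₀ - l t₀ * n t₀) * (δ₁ * a) +
        (δ₁ * δ₂ * l t₀ * m t₀ + deriv n t₀) * (δ₂ * b) = deriv α t₀ := by
      linear_combination (-(δ₁ * δ₂)) * hY +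
        (δ₁ * δ₁ * deriv α t₀ + δ₁ * δ₁ * δ₁ * (l t₀ * n t₀) * a -
          deriv m t₀ * δ₁ * a) * hδ2sq +
        (deriv α t₀ + l t₀ * n t₀ * δ₁ * a - deriv n t₀ * δ₂ * b) * hδ1sq
    have hXa : (δ₁ * a) * D = deriv n t₀ * α t₀ - n t₀ * deriv α t₀ +
        δ₁ * δ₂ * l t₀ * m t₀ * α t₀ := by
      rw [hD]
      linear_combination (δ₁ * δ₂ * l t₀ * m t₀ + deriv n t₀) * e1 - n t₀ * e2
    have hYb : (δ₂ * b) * D = m t₀ * deriv α t₀ - deriv m t₀ * α t₀ +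
        l t₀ * n t₀ * α t₀ := by
      rw [hD]
      linear_combination (-(deriv m t₀ - l t₀ * n t₀)) * e1 + m t₀ * e2
    have ha_eq : a = δ₁ * ca := by
      rw [hca, mul_div_assoc', eq_div_iff hDne]
      linear_combination δ₁ * hXa - a * D * hδ1sq
    have hb_eq : b = δ₂ * cb := by
      rw [hcb, mul_div_assoc', eq_div_iff hDne]
      linear_combination δ₂ * hYb - b * D * hδ2sq
    have hw := frame_w_zero (ν₁ t₀) (ν₂ t₀) (μ t₀)
      (γ t₀ - x - (ca • ν₁ t₀ + cb • ν₂ t₀)) δ₁ δ₂ hδ₁ hδ₂ (hμ t₀)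
      (hu₁ t₀) (hu₂ t₀) (ho t₀) ?_ ?_ ?_
    · exact sub_eq_zero.mp hw
    · rw [g_sub_comb_right, ← hadef, hu₁ t₀, ho t₀, ha_eq]; ring
    · rw [g_sub_comb_right, ← hbdef, g_comm' (ν₂ t₀) (ν₁ t₀), ho t₀,
        hu₂ t₀, hb_eq]; ring
    · rw [g_sub_comb_right, ← hcdef, gμν₁ t₀, gμν₂ t₀, hc0]; ring
  · intro hx
    have key1 : m t₀ * ca + n t₀ * cb = α t₀ := by
      rw [hca, hcb]
      field_simp
      linear_combination (-α t₀) * hD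
    have key2 : (deriv m t₀ - l t₀ * n t₀) * ca +
        (δ₁ * δ₂ * l t₀ * m t₀ + deriv n t₀) * cb = deriv α t₀ := by
      rw [hca, hcb]
      field_simp
      linear_combination (-deriv α t₀) * hD
    have hav : a = ca * δ₁ := by
      rw [hadef, hx, g_comb_right, hu₁ t₀, ho t₀]; ring
    have hbv : b = cb * δ₂ := by
      rw [hbdef, hx, g_comb_right, g_comm' (ν₂ t₀) (ν₁ t₀), ho t₀, hu₂ t₀]; ring
    have hcv : c = 0 := by
      rw [hcdef, hx, g_comb_right, gμν₁ t₀, gμν₂ t₀]; ring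
    rw [hav, hbv, hcv]
    refine ⟨by ring, ?_, ?_⟩
    · linear_combination (-(2 * α t₀ * δ₁ * δ₂)) * key1
    · linear_combination (-(4 * deriv α t₀ * δ₁ * δ₂)) * key1 +
        (-(2 * α t₀ * δ₁ * δ₂)) * key2 +
        (2 * α t₀ * (δ₁ * δ₂ * l t₀ * n t₀ * ca + δ₂ * δ₂ * l t₀ * m t₀ * cb)) * hδ1sq
end
end

section
/- Let (γ, n₁, n₂) be a non-parabolic spatial hybrid framed curve with Frenet formulas n₁' = Ln₂ + Mμ, n₂' = -δ₁δ₂Ln₁, μ' = -σδ₁δ₂Mn₁, γ' = αμ. Define the involute Inv_γ(t) = γ(t) + f₁(t)n₁(t) + f₂(t)μ(t), where f₁' = σδ₁δ₂Mf₂ and f₂' = -Mf₁ - α. Then Inv_γ'(t) = f₁(t)L(t)n₂(t); in particular (Inv_γ, n₁, μ) is a non-parabolic spatial hybrid framed curve. -/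
/-!
Differentiating `γ + f₁ n₁ + f₂ μ` with the Frenet formulas, the linear system for `(f₁, f₂)` is
exactly what cancels the `μ`-components (`α` and `f₁ M`) and the `n₁`-components (`σδ₁δ₂ M f₂`),
leaving `f₁ L n₂`. Since `n₂` is `g`-orthogonal to `n₁` and to the hybridian product
`μ = n₁ n₂`, so is the derivative of the involute.
-/

open Real Matrix

noncomputable section

theorem g_comm (x y : Fin 3 → ℝ) : g x y = g y x := by
  unfold g
  ring

theorem g_smul_left (c : ℝ) (x y : Fin 3 → ℝ) : g (c • x) y = c * g x y := by
  simp only [g, Pi.smul_apply, smul_eq_mul]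
  ring

theorem g_hprod_right_eq_zero (x y : Fin 3 → ℝ) : g y (hprod x y) = 0 := by
  simp only [g, hprod, Matrix.cons_val_zero, Matrix.cons_val_one, Matrix.cons_val_two,
    Matrix.head_cons, Matrix.tail_cons]
  ring

theorem Differentiable.hprod {x y : ℝ → Fin 3 → ℝ} (hx : Differentiable ℝ x)
    (hy : Differentiable ℝ y) : Differentiable ℝ fun t => _root_.hprod (x t) (y t) := by
  have hx' := differentiable_pi.mp hx
  have hy' := differentiable_pi.mp hy
  refine differentiable_pi.mpr fun i => ?_
  fin_cases i
  · show Differentiable ℝ fun t => x t 0 * y t 2 - y t 0 * x t 2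
    fun_prop
  · show Differentiable ℝ fun t =>
      x t 0 * y t 2 - y t 0 * x t 2 - x t 1 * y t 2 + y t 1 * x t 2
    fun_prop
  · show Differentiable ℝ fun t => y t 0 * x t 1 - x t 0 * y t 1
    fun_prop

theorem hasDerivAt_involute {E : Type*} [NormedAddCommGroup E] [NormedSpace ℝ E]
    {γ n₁ n₂ μ : ℝ → E} {f₁ f₂ : ℝ → ℝ} {L M α c t : ℝ}
    (hγ : HasDerivAt γ (α • μ t) t) (hn₁ : HasDerivAt n₁ (L • n₂ t + M • μ t) t)
    (hμ : HasDerivAt μ ((-c * M) • n₁ t) t) (hf₁ : HasDerivAt f₁ (c * M * f₂ t) t)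
    (hf₂ : HasDerivAt f₂ (-(M * f₁ t) - α) t) :
    HasDerivAt (fun s => γ s + f₁ s • n₁ s + f₂ s • μ s) ((f₁ t * L) • n₂ t) t := by
  refine ((hγ.add (hf₁.smul hn₁)).add (hf₂.smul hμ)).congr_deriv ?_
  module

theorem stmt11_general (γ n₁ n₂ μ : ℝ → Fin 3 → ℝ) (L M α f₁ f₂ : ℝ → ℝ)
    (σ δ₁ δ₂ : ℝ)
    (hμ : ∀ t, μ t = hprod (n₁ t) (n₂ t))
    (hg₁₂ : ∀ t, g (n₁ t) (n₂ t) = 0)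
    (hγd : Differentiable ℝ γ) (hn₁d : Differentiable ℝ n₁)
    (hn₂d : Differentiable ℝ n₂) (hf₁d : Differentiable ℝ f₁)
    (hf₂d : Differentiable ℝ f₂)
    (hF₁ : ∀ t, deriv n₁ t = L t • n₂ t + M t • μ t)
    (hFμ : ∀ t, deriv μ t = (-(σ * δ₁ * δ₂) * M t) • n₁ t)
    (hγ' : ∀ t, deriv γ t = α t • μ t)
    (hf₁ : ∀ t, deriv f₁ t = σ * δ₁ * δ₂ * M t * f₂ t)
    (hf₂ : ∀ t, deriv f₂ t = -(M t * f₁ t) - α t)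
    (Inv : ℝ → Fin 3 → ℝ)
    (hInv : ∀ t, Inv t = γ t + f₁ t • n₁ t + f₂ t • μ t) :
    ∀ t, deriv Inv t = (f₁ t * L t) • n₂ t ∧
      g (deriv Inv t) (n₁ t) = 0 ∧ g (deriv Inv t) (μ t) = 0 := by
  intro t
  have hμd : Differentiable ℝ μ := funext hμ ▸ hn₁d.hprod hn₂d
  have hInv' : deriv Inv t = (f₁ t * L t) • n₂ t := by
    rw [funext hInv]
    exact (hasDerivAt_involute (hγ' t ▸ (hγd t).hasDerivAt) (hF₁ t ▸ (hn₁d t).hasDerivAt)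
      (hFμ t ▸ (hμd t).hasDerivAt) (hf₁ t ▸ (hf₁d t).hasDerivAt)
      (hf₂ t ▸ (hf₂d t).hasDerivAt)).deriv
  refine ⟨hInv', ?_, ?_⟩ <;> rw [hInv', g_smul_left]
  · rw [g_comm, hg₁₂, mul_zero]
  · rw [hμ, g_hprod_right_eq_zero, mul_zero]

/-- The involute Inv_γ = γ + f₁n₁ + f₂μ satisfies Inv_γ' = f₁ L n₂, so
(Inv_γ, n₁, μ) is a non-parabolic spatial hybrid framed curve. -/
theorem stmt11 (γ n₁ n₂ μ : ℝ → Fin 3 → ℝ) (L M α f₁ f₂ : ℝ → ℝ)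
    (σ δ₁ δ₂ : ℝ)
    (hσ : σ = 1 ∨ σ = -1) (hδ₁ : δ₁ = 1 ∨ δ₁ = -1) (hδ₂ : δ₂ = 1 ∨ δ₂ = -1)
    (hμ : ∀ t, μ t = hprod (n₁ t) (n₂ t))
    (hg₁ : ∀ t, g (n₁ t) (n₁ t) = σ) (hg₂ : ∀ t, g (n₂ t) (n₂ t) = σ * δ₁ * δ₂)
    (hg₁₂ : ∀ t, g (n₁ t) (n₂ t) = 0)
    (hγd : Differentiable ℝ γ) (hn₁d : Differentiable ℝ n₁)
    (hn₂d : Differentiable ℝ n₂) (hf₁d : Differentiable ℝ f₁)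
    (hf₂d : Differentiable ℝ f₂)
    (hF₁ : ∀ t, deriv n₁ t = L t • n₂ t + M t • μ t)
    (hF₂ : ∀ t, deriv n₂ t = (-(δ₁ * δ₂) * L t) • n₁ t)
    (hFμ : ∀ t, deriv μ t = (-(σ * δ₁ * δ₂) * M t) • n₁ t)
    (hγ' : ∀ t, deriv γ t = α t • μ t)
    (hf₁ : ∀ t, deriv f₁ t = σ * δ₁ * δ₂ * M t * f₂ t)
    (hf₂ : ∀ t, deriv f₂ t = -(M t * f₁ t) - α t)
    (Inv : ℝ → Fin 3 → ℝ)
    (hInv : ∀ t, Inv t = γ t + f₁ t • n₁ t + f₂ t • μ t) :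
    ∀ t, deriv Inv t = (f₁ t * L t) • n₂ t ∧
      g (deriv Inv t) (n₁ t) = 0 ∧ g (deriv Inv t) (μ t) = 0 :=
  stmt11_general γ n₁ n₂ μ L M α f₁ f₂ σ δ₁ δ₂ hμ hg₁₂ hγd hn₁d hn₂d hf₁d hf₂d hF₁ hFμ hγ' hf₁ hf₂
    Inv hInv
end
end
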